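/- Let G be a group containing no subgroup isomorphic to ℤ × ℤ. Then for any commuting elements g, h ∈ G, the Pontryagin product g ∧ h vanishes in H₂(G; ℚ). -/

import Mathlib

/-!
Since `g` and `h` commute, `(a, b) ↦ gᵃ hᵇ` is a homomorphism `ℤ × ℤ → G`; it cannot be injective,
so `gᵃ hᵇ = 1` for some `(a, b) ≠ 0`. Modulo bar boundaries the chain `[x|y] - [y|x]` is additive
in `x` as long as `x` ranges over elements commuting with `y`. Hence
`0 = (gᵃ hᵇ) ∧ h = a • (g ∧ h)` and `0 = (gᵃ hᵇ) ∧ g = -b • (g ∧ h)`, and over `ℚ` either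
relation kills `g ∧ h`.
-/

open Finsupp

/-- Degree-2 differential of the (inhomogeneous) bar complex of `G` with
coefficients in `k`: `[a|b] ↦ [b] - [ab] + [a]`. -/
noncomputable def barD2 (k : Type) [Ring k] (G : Type) [Group G] :
    ((G × G) →₀ k) →ₗ[k] (G →₀ k) :=
  Finsupp.lift _ k _ fun p => single p.2 1 - single (p.1 * p.2) 1 + single p.1 1

/-- Degree-3 differential of the bar complex:
`[a|b|c] ↦ [b|c] - [ab|c] + [a|bc] - [a|b]`. -/
noncomputable def barD3 (k : Type) [Ring k] (G : Type) [Group G] :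
    ((G × G × G) →₀ k) →ₗ[k] ((G × G) →₀ k) :=
  Finsupp.lift _ k _ fun t =>
    single (t.2.1, t.2.2) 1 - single (t.1 * t.2.1, t.2.2) 1
      + single (t.1, t.2.1 * t.2.2) 1 - single (t.1, t.2.1) 1

/-- The second group homology `H₂(G; k)`: 2-cycles modulo 2-boundaries of the
bar complex of `G` with coefficients in `k`. -/
noncomputable abbrev groupH2 (k : Type) [Ring k] (G : Type) [Group G] : Type :=
  (barD2 k G).toAddMonoidHom.ker ⧸
    (((barD3 k G).toAddMonoidHom.range).comap (barD2 k G).toAddMonoidHom.ker.subtype)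

theorem wedge_cycle {k : Type} [Ring k] {G : Type} [Group G] (g h : G)
    (hc : g * h = h * g) :
    single (g, h) (1 : k) - single (h, g) 1 ∈ (barD2 k G).toAddMonoidHom.ker := by
  rw [AddMonoidHom.mem_ker, LinearMap.toAddMonoidHom_coe, map_sub]
  simp only [barD2, Finsupp.lift_apply, sum_single_index, one_smul, zero_smul, hc]
  abel

/-- The Pontryagin product `g ∧ h ∈ H₂(G; k)` of commuting elements `g, h` of
`G`, i.e. the homology class of the bar 2-cycle `[g|h] - [h|g]`. -/
noncomputable def wedgeClass (k : Type) [Ring k] {G : Type} [Group G]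
    (g h : G) (hc : g * h = h * g) : groupH2 k G :=
  QuotientAddGroup.mk ⟨single (g, h) 1 - single (h, g) 1, wedge_cycle g h hc⟩

section maps

variable (k : Type) [Ring k] {G H : Type} [Group G] [Group H] (f : G →* H)

noncomputable def barC1Map : (G →₀ k) →ₗ[k] (H →₀ k) := Finsupp.lmapDomain k k f

noncomputable def barC2Map : ((G × G) →₀ k) →ₗ[k] ((H × H) →₀ k) :=
  Finsupp.lmapDomain k k (Prod.map f f)

noncomputable def barC3Map : ((G × G × G) →₀ k) →ₗ[k] ((H × H × H) →₀ k) :=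
  Finsupp.lmapDomain k k (Prod.map f (Prod.map f f))

theorem mapDomain_sub' {k : Type} [Ring k] {α β : Type} (f : α → β)
    (x y : α →₀ k) : mapDomain f (x - y) = mapDomain f x - mapDomain f y :=
  (Finsupp.mapDomain.addMonoidHom f).map_sub x y

theorem barD2_comm :
    (barD2 k H).comp (barC2Map k f) = (barC1Map k f).comp (barD2 k G) := by
  apply Finsupp.lhom_ext
  intro a b
  simp only [LinearMap.comp_apply, barC2Map, barC1Map, lmapDomain_apply,
    mapDomain_single, barD2, Finsupp.lift_apply, sum_single_index, one_smul,
    zero_smul, smul_sub, smul_add]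
  simp [mapDomain_add, mapDomain_sub', mapDomain_single, Prod.map, map_mul]

theorem barD3_comm :
    (barD3 k H).comp (barC3Map k f) = (barC2Map k f).comp (barD3 k G) := by
  apply Finsupp.lhom_ext
  intro a b
  simp only [LinearMap.comp_apply, barC3Map, barC2Map, lmapDomain_apply,
    mapDomain_single, barD3, Finsupp.lift_apply, sum_single_index, one_smul,
    zero_smul, smul_sub, smul_add]
  simp [mapDomain_add, mapDomain_sub', mapDomain_single, Prod.map, map_mul]

theorem barC2Map_ker (x : (G × G) →₀ k) (hx : x ∈ (barD2 k G).toAddMonoidHom.ker) :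
    barC2Map k f x ∈ (barD2 k H).toAddMonoidHom.ker := by
  rw [AddMonoidHom.mem_ker, LinearMap.toAddMonoidHom_coe] at hx ⊢
  have := congrFun (congrArg DFunLike.coe (barD2_comm k f)) x
  simp only [LinearMap.comp_apply] at this
  rw [this, hx, map_zero]

/-- The homomorphism `H₂(G; k) → H₂(H; k)` induced by a group homomorphism
`f : G → H`. -/
noncomputable def groupH2Map : groupH2 k G →+ groupH2 k H := by
  refine QuotientAddGroup.map _ _
    ((((barC2Map k f).toAddMonoidHom.domRestrict
        (barD2 k G).toAddMonoidHom.ker).codRestrict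
      (barD2 k H).toAddMonoidHom.ker
      (fun x => barC2Map_ker k f x.1 x.2)) : _ →+ _) ?_
  rintro ⟨x, hx⟩ hmem
  simp only [AddSubgroup.mem_comap, AddSubgroup.coe_subtype,
    AddMonoidHom.mem_range] at hmem ⊢
  obtain ⟨y, hy⟩ := hmem
  refine ⟨barC3Map k f y, ?_⟩
  have h3 := congrFun (congrArg DFunLike.coe (barD3_comm k f)) y
  simp only [LinearMap.comp_apply] at h3
  simp only [LinearMap.toAddMonoidHom_coe, AddSubgroup.coe_subtype] at hy
  simp only [AddMonoidHom.codRestrict_apply, AddMonoidHom.domRestrict_apply,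
    LinearMap.toAddMonoidHom_coe, AddSubgroup.coe_subtype]
  rw [h3, hy]
  rfl

end maps

section wedge

variable (k : Type) [Ring k] {G : Type} [Group G]

noncomputable def barWedge (x y : G) :
    ((G × G) →₀ k) ⧸ LinearMap.range (barD3 k G) :=
  Submodule.mkQ _ (single (x, y) 1 - single (y, x) 1)

variable {k}

theorem wedgeClass_eq_zero_iff (g h : G) (hc : g * h = h * g) :
    wedgeClass k g h hc = 0 ↔ barWedge k g h = 0 := by
  rw [wedgeClass, QuotientAddGroup.eq_zero_iff, barWedge, Submodule.mkQ_apply,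
    Submodule.Quotient.mk_eq_zero]
  rfl

theorem barD3_single (a b c : G) :
    barD3 k G (single (a, b, c) 1) =
      single (b, c) 1 - single (a * b, c) 1 + single (a, b * c) 1 - single (a, b) 1 := by
  simp [barD3, Finsupp.lift_apply, sum_single_index]

theorem barWedge_self (x : G) : barWedge k x x = 0 := by
  rw [barWedge, sub_self, map_zero]

theorem barWedge_swap (x y : G) : barWedge k y x = -barWedge k x y := by
  rw [barWedge, barWedge, ← map_neg, neg_sub]

theorem barWedge_mul_left {a b c : G} (hac : Commute a c) (hbc : Commute b c) :
    barWedge k (a * b) c = barWedge k a c + barWedge k b c := by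
  rw [barWedge, barWedge, barWedge, ← map_add, Submodule.mkQ_apply, Submodule.mkQ_apply,
    Submodule.Quotient.eq]
  -- In the boundary of this chain, `[a|bc] - [a|cb]` and `[ac|b] - [ca|b]` cancel by commutativity.
  refine ⟨-(single (a, b, c) 1 - single (a, c, b) 1 + single (c, a, b) 1), ?_⟩
  simp only [map_neg, map_add, map_sub, barD3_single, hac.eq, hbc.eq]
  abel

theorem barWedge_one_left (x : G) : barWedge k 1 x = 0 := by
  have h := barWedge_mul_left (k := k) (Commute.one_left x) (Commute.one_left x)
  rwa [one_mul, left_eq_add] at h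

theorem barWedge_zpow_left {g x : G} (hgx : Commute g x) (n : ℤ) :
    barWedge k (g ^ n) x = n • barWedge k g x := by
  induction n using Int.induction_on with
  | zero => rw [zpow_zero, barWedge_one_left, zero_smul]
  | succ n ih =>
    rw [zpow_add_one, barWedge_mul_left (hgx.zpow_left n) hgx, ih, add_smul, one_smul]
  | pred n ih =>
    have h := barWedge_mul_left (k := k) (hgx.zpow_left (-n - 1)) hgx
    rw [← zpow_add_one, sub_add_cancel, ih] at h
    rw [eq_sub_of_add_eq h.symm, sub_smul, one_smul]

theorem barWedge_zpow_mul_zpow_left {g h x : G} (hgx : Commute g x)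
    (hhx : Commute h x) (a b : ℤ) :
    barWedge k (g ^ a * h ^ b) x = a • barWedge k g x + b • barWedge k h x := by
  rw [barWedge_mul_left (hgx.zpow_left a) (hhx.zpow_left b), barWedge_zpow_left hgx,
    barWedge_zpow_left hhx]

end wedge

section zpowPair

variable {G : Type} [Group G]

def zpowPairHom {g h : G} (hgh : Commute g h) : Multiplicative (ℤ × ℤ) →* G where
  toFun p := g ^ p.toAdd.1 * h ^ p.toAdd.2
  map_one' := by simp
  map_mul' p q := by
    simp only [toAdd_mul, Prod.fst_add, Prod.snd_add, zpow_add]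
    exact (hgh.zpow_zpow _ _).mul_mul_mul_comm _ _

theorem exists_zpow_mul_zpow_eq_one_of_commute
    (hG : ∀ K : Subgroup G, ¬ Nonempty (K ≃* Multiplicative (ℤ × ℤ)))
    {g h : G} (hgh : Commute g h) : ∃ a b : ℤ, (a ≠ 0 ∨ b ≠ 0) ∧ g ^ a * h ^ b = 1 := by
  have hninj : ¬ Function.Injective (zpowPairHom hgh) :=
    fun hinj => hG _ ⟨(MonoidHom.ofInjective hinj).symm⟩
  rw [injective_iff_map_eq_one] at hninj
  push Not at hninj
  obtain ⟨p, hp, hp1⟩ := hninj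
  refine ⟨p.toAdd.1, p.toAdd.2, ?_, hp⟩
  contrapose! hp1
  exact Multiplicative.toAdd.injective (Prod.ext hp1.1 hp1.2)

end zpowPair

/-- If `G` has no subgroup isomorphic to `ℤ × ℤ`, the Pontryagin product
`g ∧ h` of any commuting `g, h` vanishes in `H₂(G; ℚ)`. -/
theorem stmt10 (G : Type) [Group G] (hG : ∀ K : Subgroup G, ¬ Nonempty (K ≃* Multiplicative (ℤ × ℤ)))
    (g h : G) (hc : g * h = h * g) : wedgeClass ℚ g h hc = 0 := by
  obtain ⟨a, b, hab, hrel⟩ := exists_zpow_mul_zpow_eq_one_of_commute hG hc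
  rw [wedgeClass_eq_zero_iff]
  have ha : a • barWedge ℚ g h = 0 := by
    simpa [hrel, barWedge_one_left, barWedge_self] using
      (barWedge_zpow_mul_zpow_left (k := ℚ) hc (Commute.refl h) a b).symm
  have hb : b • barWedge ℚ g h = 0 := by
    simpa [hrel, barWedge_one_left, barWedge_self, barWedge_swap g h] using
      (barWedge_zpow_mul_zpow_left (k := ℚ) (Commute.refl g) hc.symm a b).symm
  rw [← Int.cast_smul_eq_zsmul ℚ] at ha hb
  rcases hab with ha0 | hb0
  · exact (smul_eq_zero.1 ha).resolve_left (Int.cast_ne_zero.2 ha0)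
  · exact (smul_eq_zero.1 hb).resolve_left (Int.cast_ne_zero.2 hb0)
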